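/- Let Q be the quiver Ã_{p,q} and let d₁, d₂ : Q₁ → ℤ be two gradings. Then d₁ and d₂ are equivalent (i.e. there exists r : Q₀ → ℤ with d₂(a) = d₁(a) + r(t(a)) − r(s(a)) for all arrows a) if and only if w(d₁) = w(d₂), where w(d) = Σ_{i=1}^{p} d(a_i) − Σ_{j=1}^{q} d(b_j). -/

import Mathlib

/-- Source map of the quiver `Ã_{p,q}` (vertices `0, …, p+q-1` in `ZMod (p+q)`). -/
def srcA (p q : ℕ) : Fin p ⊕ Fin q → ZMod (p + q)
  | Sum.inl i => ((i : ℕ) : ZMod (p + q))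
  | Sum.inr j => ((p + (j : ℕ) + 1 : ℕ) : ZMod (p + q))

/-- Target map of the quiver `Ã_{p,q}`. -/
def tgtA (p q : ℕ) : Fin p ⊕ Fin q → ZMod (p + q)
  | Sum.inl i => (((i : ℕ) + 1 : ℕ) : ZMod (p + q))
  | Sum.inr j => ((p + (j : ℕ) : ℕ) : ZMod (p + q))

/-- The weight of a grading `d` on `Ã_{p,q}`: `Σ d(aᵢ) - Σ d(bⱼ)`. -/
def wtA (p q : ℕ) (d : Fin p ⊕ Fin q → ℤ) : ℤ :=
  (∑ i : Fin p, d (Sum.inl i)) - ∑ j : Fin q, d (Sum.inr j)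

/-!
Numbering the arrows `a₁, …, a_p, b₁, …, b_q` by `finSumFinEquiv`, arrow number `k` lies on the
edge `k — k + 1` of the cycle `ZMod (p + q)`, the `bⱼ` pointing backwards. Multiplying `d₂ - d₁`
by these orientation signs turns equivalence of `d₁, d₂` into the statement that a cochain `c` on
the oriented cycle is a coboundary, and its total sum into `w(d₂) - w(d₁)`. A coboundary sums to
zero by telescoping around the cycle; conversely, if `∑ c = 0` the partial sums of `c` close up
and form a potential.
-/

open Finset

section Cycle

variable {G : Type*} [AddCommGroup G] {n : ℕ}

theorem sum_sub_around_cycle_eq_zero (r : ZMod n → G) :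
    ∑ k : Fin n, (r ((k + 1 : ℕ) : ZMod n) - r ((k : ℕ) : ZMod n)) = 0 := by
  rw [Fin.sum_univ_eq_sum_range (fun k => r ((k + 1 : ℕ) : ZMod n) - r (k : ZMod n)),
    sum_range_sub (fun k => r (k : ZMod n)), ZMod.natCast_self, Nat.cast_zero, sub_self]

def finPartialSum (c : Fin n → G) (m : ℕ) : G :=
  ∑ i ∈ range m, if h : i < n then c ⟨i, h⟩ else 0

theorem finPartialSum_succ_sub (c : Fin n → G) (k : Fin n) :
    finPartialSum c (k + 1) - finPartialSum c k = c k := by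
  rw [finPartialSum, sum_range_succ, ← finPartialSum, add_sub_cancel_left, dif_pos k.isLt]

theorem finPartialSum_self (c : Fin n → G) : finPartialSum c n = ∑ k, c k := by
  rw [finPartialSum, ← Fin.sum_univ_eq_sum_range]
  simp

theorem finPartialSum_mod_of_le (c : Fin n → G) (hc : ∑ k, c k = 0) {m : ℕ} (hm : m ≤ n) :
    finPartialSum c (m % n) = finPartialSum c m := by
  rcases hm.lt_or_eq with hlt | rfl
  · rw [Nat.mod_eq_of_lt hlt]
  · rw [Nat.mod_self, finPartialSum_self, hc, finPartialSum, range_zero, sum_empty]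

def cyclePotential (c : Fin n → G) (v : ZMod n) : G :=
  finPartialSum c v.val

theorem cyclePotential_natCast (c : Fin n → G) (m : ℕ) :
    cyclePotential c (m : ZMod n) = finPartialSum c (m % n) := by
  rw [cyclePotential, ZMod.val_natCast]

theorem cyclePotential_succ_sub (c : Fin n → G) (hc : ∑ k, c k = 0) (k : Fin n) :
    cyclePotential c ((k + 1 : ℕ) : ZMod n) - cyclePotential c ((k : ℕ) : ZMod n) = c k := by
  rw [cyclePotential_natCast, cyclePotential_natCast, finPartialSum_mod_of_le c hc k.isLt,
    Nat.mod_eq_of_lt k.isLt, finPartialSum_succ_sub]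

theorem exists_potential_on_cycle_iff (c : Fin n → G) :
    (∃ r : ZMod n → G, ∀ k : Fin n, c k = r ((k + 1 : ℕ) : ZMod n) - r ((k : ℕ) : ZMod n)) ↔
      ∑ k, c k = 0 :=
  ⟨fun ⟨r, hr⟩ => by simpa only [← hr] using sum_sub_around_cycle_eq_zero r,
    fun hc => ⟨cyclePotential c, fun k => (cyclePotential_succ_sub c hc k).symm⟩⟩

end Cycle

section AffineA

variable {p q : ℕ}

def arrowSign : Fin p ⊕ Fin q → ℤ :=
  Sum.elim (fun _ => 1) (fun _ => -1)

theorem arrowSign_mul_self (a : Fin p ⊕ Fin q) : arrowSign a * arrowSign a = 1 := by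
  cases a <;> simp [arrowSign]

theorem wtA_eq_sum_arrowSign_mul (d : Fin p ⊕ Fin q → ℤ) :
    wtA p q d = ∑ a, arrowSign a * d a := by
  simp [wtA, arrowSign, Fintype.sum_sum_type, sub_eq_add_neg]

theorem wtA_sub (d₁ d₂ : Fin p ⊕ Fin q → ℤ) : wtA p q (d₂ - d₁) = wtA p q d₂ - wtA p q d₁ := by
  simp only [wtA_eq_sum_arrowSign_mul, Pi.sub_apply, mul_sub, sum_sub_distrib]

theorem tgtA_sub_srcA (r : ZMod (p + q) → ℤ) (a : Fin p ⊕ Fin q) :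
    r (tgtA p q a) - r (srcA p q a) =
      arrowSign a * (r ((finSumFinEquiv a + 1 : ℕ) : ZMod (p + q)) -
        r ((finSumFinEquiv a : ℕ) : ZMod (p + q))) := by
  cases a <;> simp [tgtA, srcA, arrowSign, add_assoc]

theorem eq_add_tgtA_sub_srcA_iff (d₁ d₂ : Fin p ⊕ Fin q → ℤ) (r : ZMod (p + q) → ℤ)
    (a : Fin p ⊕ Fin q) :
    d₂ a = d₁ a + (r (tgtA p q a) - r (srcA p q a)) ↔
      arrowSign a * (d₂ - d₁) a = r ((finSumFinEquiv a + 1 : ℕ) : ZMod (p + q)) -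
        r ((finSumFinEquiv a : ℕ) : ZMod (p + q)) := by
  rw [tgtA_sub_srcA, Pi.sub_apply, ← sub_eq_iff_eq_add']
  constructor <;> intro h
  · rw [h, ← mul_assoc, arrowSign_mul_self, one_mul]
  · rw [← h, ← mul_assoc, arrowSign_mul_self, one_mul]

end AffineA

theorem graded_equiv_iff_weight_eq_general (p q : ℕ)
    (d₁ d₂ : Fin p ⊕ Fin q → ℤ) :
    (∃ r : ZMod (p + q) → ℤ, ∀ a, d₂ a = d₁ a + (r (tgtA p q a) - r (srcA p q a))) ↔
      wtA p q d₁ = wtA p q d₂ := by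
  set c : Fin (p + q) → ℤ := fun k =>
    arrowSign (finSumFinEquiv.symm k) * (d₂ - d₁) (finSumFinEquiv.symm k)
  calc (∃ r : ZMod (p + q) → ℤ, ∀ a, d₂ a = d₁ a + (r (tgtA p q a) - r (srcA p q a)))
      ↔ ∃ r : ZMod (p + q) → ℤ, ∀ k : Fin (p + q),
          c k = r ((k + 1 : ℕ) : ZMod (p + q)) - r ((k : ℕ) : ZMod (p + q)) := by
        simp only [eq_add_tgtA_sub_srcA_iff, finSumFinEquiv.forall_congr_left,
          Equiv.apply_symm_apply, c]
    _ ↔ ∑ k, c k = 0 := exists_potential_on_cycle_iff c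
    _ ↔ wtA p q d₁ = wtA p q d₂ := by
        rw [finSumFinEquiv.symm.sum_comp (fun a => arrowSign a * (d₂ - d₁) a),
          ← wtA_eq_sum_arrowSign_mul, wtA_sub, sub_eq_zero, eq_comm]

/-- two gradings on `Ã_{p,q}` are equivalent iff they have the same weight. -/
theorem graded_equiv_iff_weight_eq (p q : ℕ) (hp : 1 ≤ p) (hq : 1 ≤ q)
    (d₁ d₂ : Fin p ⊕ Fin q → ℤ) :
    (∃ r : ZMod (p + q) → ℤ, ∀ a, d₂ a = d₁ a + (r (tgtA p q a) - r (srcA p q a))) ↔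
      wtA p q d₁ = wtA p q d₂ :=
  graded_equiv_iff_weight_eq_general p q d₁ d₂
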